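/- arXiv:1902.10983 — 2 statements merged into one kernel-verified Lean document; each statement's English description precedes it below -/
import Mathlib

section
/- For every i ≥ 2, the Zimin word Z_i has locality number exactly 2^{i-2}, equivalently (|Z_i|+1)/4. -/
noncomputable section

attribute [local instance] Classical.propDecidable

variable {X : Type*} [DecidableEq X]

/-- Number of maximal blocks of `true`s in a list of booleans, where the first
argument is the preceding symbol. -/
def blocksAux : Bool → List Bool → ℕ
  | _, [] => 0
  | prev, b :: rest => (if b = true ∧ prev = false then 1 else 0) + blocksAux b rest

/-- Number of maximal contiguous blocks of positions of `w` whose letter lies in `S`. -/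
def blockCount (w : List X) (S : List X) : ℕ :=
  blocksAux false (w.map (fun x => decide (x ∈ S)))

/-- `σ` is a marking sequence for `w`: an enumeration, without repetition,
of the alphabet of `w`. -/
def IsMarkingSeq (w σ : List X) : Prop := σ.Nodup ∧ σ.toFinset = w.toFinset

/-- The marking number of the marking sequence `σ` on `w`: the maximum, over all
stages `i`, of the number of maximal contiguous marked blocks after marking the
first `i` letters of `σ`. -/
def markingNumber (w σ : List X) : ℕ :=
  Finset.sup (Finset.range (σ.length + 1)) (fun i => blockCount w (σ.take i))

/-- The locality number of `w`: the minimum marking number over all marking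
sequences for `w`. -/
def locality (w : List X) : ℕ :=
  sInf {n | ∃ σ, IsMarkingSeq w σ ∧ markingNumber w σ = n}

/-- The Zimin words over the distinct letters `1, 2, 3, ...` (as natural numbers):
`Z₁ = x₁` and `Z_{i+1} = Z_i x_{i+1} Z_i`. -/
def zimin : ℕ → List ℕ
  | 0 => []
  | n + 1 => zimin n ++ (n + 1) :: zimin n

/-!
In `Z_i` every other letter is `x₁`, each other letter sits alone between two `x₁`'s, and `x_j`
occurs `2 ^ (i - j)` times. So while `x₁` is unmarked the blocks are exactly the marked
occurrences, and once `x₁` is marked its `2 ^ (i - 1)` occurrences start out as separate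
blocks, each marked occurrence of another letter joining two of them. The block counts just
before and just after marking `x₁` therefore add up to `2 ^ (i - 1)`, so one of them is at
least `2 ^ (i - 2)`; marking `x₂` and then `x₁` first attains this bound.
-/

theorem blocksAux_append (p : Bool) (l₁ l₂ : List Bool) :
    blocksAux p (l₁ ++ l₂) = blocksAux p l₁ + blocksAux (l₁.getLastD p) l₂ := by
  induction l₁ generalizing p with
  | nil => simp [blocksAux]
  | cons a t ih =>
    simp only [List.cons_append, blocksAux, ih a]
    cases t <;> simp [List.getLastD] <;> omega

theorem blocksAux_append_cons_self {c b : Bool} {l : List Bool} (hhead : l.head? = some c)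
    (hlast : l.getLast? = some c) :
    blocksAux false (l ++ b :: l) + (c && b).toNat = 2 * blocksAux false l + (!c && b).toNat := by
  obtain ⟨t, rfl⟩ : ∃ t, l = c :: t := by
    cases l with
    | nil => simp at hhead
    | cons a t => simp_all
  rw [List.getLast?_cons, Option.some_inj, ← List.getLastD_eq_getLast?] at hlast
  rw [List.cons_append, blocksAux, blocksAux_append, hlast]
  simp only [blocksAux]
  cases b <;> cases c <;> simp <;> omega

theorem List.countP_mem_append_singleton {l t : List X} {a : X} (ha : a ∉ t) :
    l.countP (· ∈ t ++ [a]) = l.countP (· ∈ t) + l.count a := by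
  induction l with
  | nil => rfl
  | cons x l ih =>
    rw [List.countP_cons, ih, List.countP_cons, List.count_cons]
    by_cases hx : x = a
    · simp [hx, ha]
      omega
    · simp [hx]
      omega

theorem List.exists_take_add_one_eq_append_singleton {σ : List X} {a : X} (ha : a ∈ σ) :
    ∃ k < σ.length, a ∉ σ.take k ∧ σ.take (k + 1) = σ.take k ++ [a] := by
  have hk := List.idxOf_lt_length_of_mem ha
  refine ⟨σ.idxOf a, hk, by simp [List.mem_take_iff_idxOf_lt ha], ?_⟩
  rw [← List.take_concat_get' σ _ hk, List.getElem_idxOf]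

theorem isMarkingSeq_dedup (w : List X) : IsMarkingSeq w w.dedup :=
  ⟨List.nodup_dedup w, by ext; simp⟩

theorem locality_le_markingNumber {w σ : List X} (hσ : IsMarkingSeq w σ) :
    locality w ≤ markingNumber w σ :=
  Nat.sInf_le ⟨σ, hσ, rfl⟩

theorem le_locality {w : List X} {n : ℕ}
    (h : ∀ σ, IsMarkingSeq w σ → n ≤ markingNumber w σ) : n ≤ locality w :=
  le_csInf ⟨_, w.dedup, isMarkingSeq_dedup w, rfl⟩ fun _ ⟨σ, hσ, hn⟩ => hn ▸ h σ hσ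

theorem blockCount_take_le_markingNumber (w : List X) {σ : List X} {k : ℕ}
    (hk : k ≤ σ.length) : blockCount w (σ.take k) ≤ markingNumber w σ :=
  Finset.le_sup (f := fun k => blockCount w (σ.take k)) (Finset.mem_range.2 (by omega))

theorem markingNumber_le {w σ : List X} {n : ℕ}
    (h : ∀ k ≤ σ.length, blockCount w (σ.take k) ≤ n) : markingNumber w σ ≤ n :=
  Finset.sup_le fun k hk => h k (by simpa [Nat.lt_succ_iff] using hk)

theorem zimin_succ (n : ℕ) : zimin (n + 1) = zimin n ++ (n + 1) :: zimin n := rfl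

theorem mem_zimin {x i : ℕ} : x ∈ zimin i ↔ 1 ≤ x ∧ x ≤ i := by
  induction i with
  | zero => simp [zimin]; omega
  | succ n ih => simp only [zimin_succ, List.mem_append, List.mem_cons, ih]; omega

theorem length_zimin (i : ℕ) : (zimin i).length = 2 ^ i - 1 := by
  induction i with
  | zero => rfl
  | succ n ih =>
    simp only [zimin_succ, List.length_append, List.length_cons, ih, pow_succ]
    have := Nat.one_le_two_pow (n := n)
    omega

theorem reverse_zimin (i : ℕ) : (zimin i).reverse = zimin i := by
  induction i with
  | zero => rfl
  | succ n ih => simp [zimin_succ, ih]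

theorem head?_zimin {i : ℕ} (hi : 1 ≤ i) : (zimin i).head? = some 1 := by
  induction i, hi using Nat.le_induction with
  | base => rfl
  | succ n hn ih => simp [zimin_succ, List.head?_append, ih]

theorem getLast?_zimin {i : ℕ} (hi : 1 ≤ i) : (zimin i).getLast? = some 1 := by
  rw [← List.head?_reverse, reverse_zimin, head?_zimin hi]

theorem count_zimin {i j : ℕ} (hj : 1 ≤ j) (hji : j ≤ i) :
    (zimin i).count j = 2 ^ (i - j) := by
  induction i with
  | zero => omega
  | succ n ih =>
    rw [zimin_succ, List.count_append, List.count_cons]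
    rcases Nat.lt_or_ge n j with hnj | hjn
    · obtain rfl : j = n + 1 := by omega
      have : (zimin n).count (n + 1) = 0 := List.count_eq_zero.2 (by simp [mem_zimin])
      simp [this]
    · rw [ih hjn, show n + 1 - j = n - j + 1 by omega, pow_succ,
        beq_false_of_ne (by omega)]
      simp only [Bool.false_eq_true, if_false]
      ring

theorem blockCount_zimin_succ (S : List ℕ) {n : ℕ} (hn : 1 ≤ n) :
    blockCount (zimin (n + 1)) S + (decide (1 ∈ S) && decide (n + 1 ∈ S)).toNat =
      2 * blockCount (zimin n) S + (!decide (1 ∈ S) && decide (n + 1 ∈ S)).toNat := by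
  unfold blockCount
  rw [zimin_succ, List.map_append, List.map_cons]
  exact blocksAux_append_cons_self (by simp [List.head?_map, head?_zimin hn])
    (by simp [List.getLast?_map, getLast?_zimin hn])

theorem countP_zimin_succ (S : List ℕ) (n : ℕ) :
    (zimin (n + 1)).countP (· ∈ S) =
      2 * (zimin n).countP (· ∈ S) + (decide (n + 1 ∈ S)).toNat := by
  rw [zimin_succ, List.countP_append, List.countP_cons]
  cases decide (n + 1 ∈ S) <;> simp <;> ring

theorem blockCount_zimin_of_one_not_mem {S : List ℕ} (h1 : 1 ∉ S) (i : ℕ) :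
    blockCount (zimin i) S = (zimin i).countP (· ∈ S) := by
  rcases Nat.eq_zero_or_pos i with rfl | hi
  · rfl
  induction i, hi using Nat.le_induction with
  | base => simp [blockCount, zimin, blocksAux, h1]
  | succ n hn ih =>
    have := blockCount_zimin_succ S hn
    rw [countP_zimin_succ, ← ih]
    simp only [h1, decide_false, Bool.false_and, Bool.not_false, Bool.true_and,
      Bool.toNat_false] at this
    omega

theorem blockCount_zimin_add_countP_of_one_mem {S : List ℕ} (h1 : 1 ∈ S) {i : ℕ}
    (hi : 1 ≤ i) : blockCount (zimin i) S + (zimin i).countP (· ∈ S) = 2 ^ i := by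
  induction i, hi using Nat.le_induction with
  | base => simp [blockCount, zimin, blocksAux, h1]
  | succ n hn ih =>
    have := blockCount_zimin_succ S hn
    rw [countP_zimin_succ, pow_succ, ← ih]
    simp only [h1, decide_true, Bool.true_and, Bool.not_true, Bool.false_and,
      Bool.toNat_false] at this
    omega

theorem blockCount_zimin_add_blockCount_append_one {t : List ℕ} (h1 : 1 ∉ t) {i : ℕ}
    (hi : 1 ≤ i) : blockCount (zimin i) t + blockCount (zimin i) (t ++ [1]) = 2 ^ (i - 1) := by
  have hafter := blockCount_zimin_add_countP_of_one_mem (S := t ++ [1]) (by simp) hi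
  rw [List.countP_mem_append_singleton h1, count_zimin le_rfl hi,
    ← blockCount_zimin_of_one_not_mem h1] at hafter
  have : 2 ^ i = 2 * 2 ^ (i - 1) := by rw [← pow_succ']; congr 1; omega
  omega

theorem two_pow_le_markingNumber_zimin {i : ℕ} (hi : 2 ≤ i) {σ : List ℕ}
    (hσ : IsMarkingSeq (zimin i) σ) : 2 ^ (i - 2) ≤ markingNumber (zimin i) σ := by
  have h1 : 1 ∈ σ := by
    rw [← List.mem_toFinset, hσ.2, List.mem_toFinset, mem_zimin]
    omega
  obtain ⟨k, hk, h1k, htake⟩ := List.exists_take_add_one_eq_append_singleton h1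
  have hsum := blockCount_zimin_add_blockCount_append_one h1k (i := i) (by omega)
  rw [← htake] at hsum
  have hbefore := blockCount_take_le_markingNumber (zimin i) hk.le
  have hafter := blockCount_take_le_markingNumber (zimin i) (k := k + 1) hk
  obtain ⟨m, rfl⟩ : ∃ m, i = m + 2 := ⟨i - 2, by omega⟩
  simp only [Nat.add_sub_cancel, show m + 2 - 1 = m + 1 by omega, pow_succ] at hsum ⊢
  omega

/-- Marking `x₂` first creates `2 ^ (i - 2)` isolated blocks; once `x₁` is marked too, every
further letter only merges blocks. -/
def ziminMarkingSeq (i : ℕ) : List ℕ := 2 :: 1 :: List.range' 3 (i - 2)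

theorem isMarkingSeq_ziminMarkingSeq {i : ℕ} (hi : 2 ≤ i) :
    IsMarkingSeq (zimin i) (ziminMarkingSeq i) := by
  refine ⟨by simp [ziminMarkingSeq, List.nodup_range', List.mem_range'_1], ?_⟩
  ext x
  simp only [ziminMarkingSeq, List.mem_toFinset, List.mem_cons, List.mem_range'_1, mem_zimin]
  omega

theorem markingNumber_ziminMarkingSeq_le {i : ℕ} (hi : 2 ≤ i) :
    markingNumber (zimin i) (ziminMarkingSeq i) ≤ 2 ^ (i - 2) := by
  have hcount2 : (zimin i).countP (· = 2) = 2 ^ (i - 2) :=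
    List.count_eq_countP.symm.trans (count_zimin (by omega) hi)
  have hcount1 := count_zimin (i := i) (j := 1) le_rfl (by omega)
  refine markingNumber_le fun k _ => ?_
  match k with
  | 0 => simp [blockCount_zimin_of_one_not_mem]
  | 1 => simp [ziminMarkingSeq, blockCount_zimin_of_one_not_mem, hcount2]
  | k + 2 =>
    set S := (ziminMarkingSeq i).take (k + 2)
    have hS := blockCount_zimin_add_countP_of_one_mem (S := S) (by simp [S, ziminMarkingSeq])
      (i := i) (by omega)
    have hsub : (zimin i).countP (· ∈ [2] ++ [1]) ≤ (zimin i).countP (· ∈ S) :=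
      List.countP_mono_left fun x _ hx => by
        simp [S, ziminMarkingSeq] at hx ⊢
        omega
    rw [List.countP_mem_append_singleton (by simp)] at hsub
    simp only [List.mem_singleton] at hsub
    obtain ⟨m, rfl⟩ : ∃ m, i = m + 2 := ⟨i - 2, by omega⟩
    simp only [Nat.add_sub_cancel, show m + 2 - 1 = m + 1 by omega, pow_succ] at *
    omega

/-- For every `i ≥ 2`, the Zimin word `Z_i` has locality number exactly `2^(i-2)`,
equivalently `(|Z_i| + 1) / 4`. -/
theorem locality_zimin (i : ℕ) (hi : 2 ≤ i) :
    locality (zimin i) = 2 ^ (i - 2) ∧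
      locality (zimin i) = ((zimin i).length + 1) / 4 := by
  have hloc : locality (zimin i) = 2 ^ (i - 2) :=
    le_antisymm
      ((locality_le_markingNumber (isMarkingSeq_ziminMarkingSeq hi)).trans
        (markingNumber_ziminMarkingSeq_le hi))
      (le_locality fun _ => two_pow_le_markingNumber_zimin hi)
  refine ⟨hloc, ?_⟩
  obtain ⟨m, rfl⟩ : ∃ m, i = m + 2 := ⟨i - 2, by omega⟩
  rw [hloc, length_zimin, Nat.sub_add_cancel Nat.one_le_two_pow, pow_add]
  simp
end
end

section
/- Let G = (V,E) be a graph, and let socw(G) be the second order cutwidth: the minimum over linear arrangements L of the maximum over i of |cut_L(i−1) ∪ cut_L(i)|, where cut_L(i) is the set of edges with exactly one endpoint among the first i vertices of L. Then pathwidth(G') ≤ socw(G), where G' is the incidence-split graph of G (vertices v_u for each incidence, edge {u_v,v_u} per edge of G, and cliques on {v_u : u ~ v} for each v). In particular pathwidth(G') ≤ 2·cutwidth(G) since socw(G) ≤ 2·cutwidth(G). -/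
noncomputable section

attribute [local instance] Classical.propDecidable

/-- `B 0, B 1, ..., B m` is a path decomposition of the graph `G`: every edge is
covered by some bag, and the bags containing any fixed vertex form a nonempty
contiguous interval of indices. -/
def IsPathDecomp {W : Type*} (G : SimpleGraph W) (m : ℕ) (B : ℕ → Finset W) : Prop :=
  (∀ u v, G.Adj u v → ∃ t ≤ m, u ∈ B t ∧ v ∈ B t) ∧
  (∀ v : W, ∃ i j, i ≤ j ∧ j ≤ m ∧ ∀ t, v ∈ B t ↔ (i ≤ t ∧ t ≤ j))

/-- The pathwidth of a graph: the minimum, over path decompositions, of the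
maximum bag size minus one. -/
def pathwidth {W : Type*} (G : SimpleGraph W) : ℕ :=
  sInf {w | ∃ m B, IsPathDecomp G m B ∧ ∀ t, (B t).card ≤ w + 1}

variable {V : Type*} [DecidableEq V] [Fintype V]

/-- The number of edges of `G` crossing the cut `(S, Sᶜ)`, counted via their
orientation from `S` to `Sᶜ`. -/
def cutSizeSG (G : SimpleGraph V) (S : Finset V) : ℕ :=
  (Finset.univ.filter (fun p : V × V => G.Adj p.1 p.2 ∧ p.1 ∈ S ∧ p.2 ∉ S)).card

/-- The cutwidth of the linear arrangement `L`: the maximum number of edges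
crossing any prefix cut of `L`. -/
def cwVal (G : SimpleGraph V) (L : List V) : ℕ :=
  Finset.sup (Finset.range (L.length + 1)) (fun i => cutSizeSG G (L.take i).toFinset)

/-- The cutwidth of `G`: the minimum cutwidth over all linear arrangements of the
vertices of `G`. -/
def cutwidthSG (G : SimpleGraph V) : ℕ :=
  sInf {n | ∃ L : List V, L.Nodup ∧ (∀ v, v ∈ L) ∧ cwVal G L = n}

/-- The incidence-split graph `G'` of `G`: one vertex `v_u = (v, u)` for each
incidence of a vertex `v` with an edge `{u, v}` of `G`; edges `{u_v, v_u}` for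
every edge `{u, v}` of `G`, plus a clique on `{v_u : u ∼ v}` for every vertex `v`. -/
def splitGraph (G : SimpleGraph V) : SimpleGraph {p : V × V // G.Adj p.1 p.2} :=
  SimpleGraph.fromRel (fun a b =>
    (a.val.1 = b.val.2 ∧ a.val.2 = b.val.1) ∨ a.val.1 = b.val.1)

/-- The set of edges of `G` crossing the cut `(S, Sᶜ)`, oriented from `S` to
`Sᶜ`. -/
def cutSetSG (G : SimpleGraph V) (S : Finset V) : Finset (V × V) :=
  Finset.univ.filter (fun p : V × V => G.Adj p.1 p.2 ∧ p.1 ∈ S ∧ p.2 ∉ S)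

/-- The second order cutwidth of the linear arrangement `L`: the maximum, over
`i`, of the number of edges crossing the `(i-1)`-st or the `i`-th prefix cut. -/
def socVal (G : SimpleGraph V) (L : List V) : ℕ :=
  Finset.sup (Finset.range (L.length + 1)) (fun i =>
    (cutSetSG G (L.take i).toFinset ∪ cutSetSG G (L.take (i + 1)).toFinset).card)

/-- The second order cutwidth of `G`: the minimum over all linear arrangements. -/
def socw (G : SimpleGraph V) : ℕ :=
  sInf {n | ∃ L : List V, L.Nodup ∧ (∀ v, v ∈ L) ∧ socVal G L = n}

/-! Fix an arrangement with positions `p : V → ℕ` below `n` and read time as the slots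
`(i, r)`, `i < n`, `r ≤ n`, ordered lexicographically and encoded as `i * (n + 1) + r`.
The incidence `v_u` lives from the home slot `(p v, 0)` of `v` to the handover slot
`(min (p u) (p v), max (p u) (p v) + 1)` of the edge `uv`, where it meets `u_v`; all incidences
of `v` meet at the home slot of `v`. Every incidence alive in block `i` belongs to an edge
spanning position `i`, i.e. crossing the `i`-th or the `(i+1)`-st prefix cut, and only the
edge handed over at the current slot contributes both of its incidences, so every bag has at
most `socVal + 1` elements. -/

section IntervalBags

variable {W : Type*} [Fintype W]

def intervalBags (a b : W → ℕ) (t : ℕ) : Finset W :=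
  Finset.univ.filter fun w => t ∈ Set.uIcc (a w) (b w)

theorem mem_intervalBags {a b : W → ℕ} {t : ℕ} {w : W} :
    w ∈ intervalBags a b t ↔ t ∈ Set.uIcc (a w) (b w) := by
  simp [intervalBags]

theorem isPathDecomp_intervalBags (G : SimpleGraph W) {m : ℕ} {a b : W → ℕ}
    (ha : ∀ w, a w ≤ m) (hb : ∀ w, b w ≤ m)
    (hG : ∀ u v, G.Adj u v → ∃ t, t ∈ Set.uIcc (a u) (b u) ∧ t ∈ Set.uIcc (a v) (b v)) :
    IsPathDecomp G m (intervalBags a b) := by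
  refine ⟨fun u v huv => ?_, fun w =>
    ⟨a w ⊓ b w, a w ⊔ b w, inf_le_sup, sup_le (ha w) (hb w), fun _ => mem_intervalBags⟩⟩
  obtain ⟨t, hu, hv⟩ := hG u v huv
  exact ⟨t, hu.2.trans (sup_le (ha u) (hb u)), mem_intervalBags.2 hu, mem_intervalBags.2 hv⟩

end IntervalBags

theorem pathwidth_le_of_isPathDecomp {W : Type*} {G : SimpleGraph W} {m w : ℕ}
    {B : ℕ → Finset W} (hB : IsPathDecomp G m B) (hcard : ∀ t, (B t).card ≤ w + 1) :
    pathwidth G ≤ w :=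
  Nat.sInf_le ⟨m, B, hB, hcard⟩

section Handover

variable {α : Type*} (p : α → ℕ) (n : ℕ)

def home (a : α) : ℕ := p a * (n + 1)

def handover (a b : α) : ℕ := min (p a) (p b) * (n + 1) + (max (p a) (p b) + 1)

def orient (e : α × α) : α × α := if p e.1 < p e.2 then e else e.swap

variable {p n}

theorem handover_comm (a b : α) : handover p n a b = handover p n b a := by
  simp only [handover, min_comm, max_comm]

theorem home_div (a : α) : home p n a / (n + 1) = p a :=
  Nat.mul_div_cancel _ n.succ_pos

theorem handover_div {a b : α} (h : max (p a) (p b) < n) :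
    handover p n a b / (n + 1) = min (p a) (p b) := by
  rw [handover, add_comm, Nat.add_mul_div_right _ _ n.succ_pos, Nat.div_eq_of_lt (by omega),
    zero_add]

theorem handover_mod {a b : α} (h : max (p a) (p b) < n) :
    handover p n a b % (n + 1) = max (p a) (p b) + 1 := by
  rw [handover, add_comm, Nat.add_mul_mod_self_right, Nat.mod_eq_of_lt (by omega)]

theorem handover_le_succ_min_mul {a b : α} (h : max (p a) (p b) < n) :
    handover p n a b ≤ (min (p a) (p b) + 1) * (n + 1) := by
  rw [handover, add_one_mul]
  omega

theorem home_le_handover {a b : α} (h : p a ≤ p b) : home p n a ≤ handover p n a b := by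
  rw [home, handover, min_eq_left h]
  omega

theorem handover_le_home {a b : α} (hba : p b < p a) (ha : p a < n) :
    handover p n a b ≤ home p n a :=
  calc handover p n a b ≤ (min (p a) (p b) + 1) * (n + 1) :=
        handover_le_succ_min_mul (max_lt ha (hba.trans ha))
    _ ≤ home p n a := Nat.mul_le_mul_right _ (by omega)

theorem home_le {a : α} (ha : p a < n) : home p n a ≤ n * (n + 1) :=
  Nat.mul_le_mul_right _ ha.le

theorem handover_le {a b : α} (ha : p a < n) (hb : p b < n) : handover p n a b ≤ n * (n + 1) :=
  (handover_le_succ_min_mul (max_lt ha hb)).trans (Nat.mul_le_mul_right _ (by omega))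

theorem div_mem_uIcc_of_mem_uIcc_home_handover {a b : α} {t : ℕ} (hab : max (p a) (p b) < n)
    (ht : t ∈ Set.uIcc (home p n a) (handover p n a b)) :
    t / (n + 1) ∈ Set.uIcc (p a) (p b) := by
  have hmono : Monotone (· / (n + 1)) := fun _ _ h => Nat.div_le_div_right h
  have hdiv := hmono.mapsTo_uIcc ht
  rw [home_div, handover_div hab] at hdiv
  exact Set.uIcc_subset_uIcc_left (Set.mem_uIcc.2 (by omega)) hdiv

theorem eq_and_eq_of_handover_eq {a b a' b' : α} (hab : p a < p b) (hab' : p a' < p b')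
    (hb : p b < n) (hb' : p b' < n) (h : handover p n a b = handover p n a' b') :
    p a = p a' ∧ p b = p b' := by
  have hdiv := congrArg (· / (n + 1)) h
  have hmod := congrArg (· % (n + 1)) h
  have hmax : max (p a) (p b) < n := max_lt (hab.trans hb) hb
  have hmax' : max (p a') (p b') < n := max_lt (hab'.trans hb') hb'
  simp only [handover_div hmax, handover_div hmax', handover_mod hmax, handover_mod hmax']
    at hdiv hmod
  omega

theorem eq_or_eq_swap_of_orient_eq {e e' : α × α} (h : orient p e = orient p e') :
    e = e' ∨ e = e'.swap := by
  unfold orient at h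
  split_ifs at h
  exacts [.inl h, .inr h, .inr (by rw [← h, Prod.swap_swap]), .inl (Prod.swap_injective h)]

end Handover

section SplitDecomposition

omit [DecidableEq V]

variable {G : SimpleGraph V} {p : V → ℕ} {n : ℕ}

variable (G p n) in
def splitBag : ℕ → Finset {e : V × V // G.Adj e.1 e.2} :=
  intervalBags (fun s => home p n s.1.1) (fun s => handover p n s.1.1 s.1.2)

theorem mem_splitBag {t : ℕ} {s : {e : V × V // G.Adj e.1 e.2}} :
    s ∈ splitBag G p n t ↔ t ∈ Set.uIcc (home p n s.1.1) (handover p n s.1.1 s.1.2) :=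
  mem_intervalBags

variable (G p) in
def edgesOver (i : ℕ) : Finset (V × V) :=
  Finset.univ.filter fun e => G.Adj e.1 e.2 ∧ p e.1 < p e.2 ∧ i ∈ Set.Icc (p e.1) (p e.2)

theorem isPathDecomp_splitBag (hpn : ∀ v, p v < n) :
    IsPathDecomp (splitGraph G) (n * (n + 1)) (splitBag G p n) := by
  refine isPathDecomp_intervalBags _ (fun s => home_le (hpn _))
    (fun s => handover_le (hpn _) (hpn _)) fun s s' hadj => ?_
  obtain ⟨-, hrel⟩ := (SimpleGraph.fromRel_adj _ _ _).1 hadj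
  have hcases : (s.1.1 = s'.1.2 ∧ s.1.2 = s'.1.1) ∨ s.1.1 = s'.1.1 := by
    rcases hrel with (h | h) | (h | h)
    exacts [.inl h, .inr h, .inl ⟨h.2.symm, h.1.symm⟩, .inr h.symm]
  rcases hcases with ⟨h1, h2⟩ | h
  · refine ⟨handover p n s.1.1 s.1.2, Set.right_mem_uIcc, ?_⟩
    rw [h1, h2, handover_comm]
    exact Set.right_mem_uIcc
  · refine ⟨home p n s.1.1, Set.left_mem_uIcc, ?_⟩
    rw [h]
    exact Set.left_mem_uIcc

theorem orient_mem_edgesOver (hp : Function.Injective p) (hpn : ∀ v, p v < n) {t : ℕ}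
    {s : {e : V × V // G.Adj e.1 e.2}} (hs : s ∈ splitBag G p n t) :
    orient p s.1 ∈ edgesOver G p (t / (n + 1)) := by
  have hi := div_mem_uIcc_of_mem_uIcc_home_handover (max_lt (hpn _) (hpn _))
    (mem_splitBag.1 hs)
  have hne : p s.1.1 ≠ p s.1.2 := hp.ne (G.ne_of_adj s.2)
  unfold orient
  split_ifs with hlt
  · simp only [edgesOver, Finset.mem_filter, Finset.mem_univ, true_and]
    exact ⟨s.2, hlt, Set.uIcc_of_le hlt.le ▸ hi⟩
  · have hgt : p s.1.2 < p s.1.1 := by omega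
    simp only [edgesOver, Finset.mem_filter, Finset.mem_univ, true_and, Prod.fst_swap,
      Prod.snd_swap]
    exact ⟨s.2.symm, hgt, Set.uIcc_of_ge hgt.le ▸ hi⟩

theorem handover_eq_of_swap_mem_splitBag (hpn : ∀ v, p v < n) {t : ℕ}
    {s s' : {e : V × V // G.Adj e.1 e.2}} (hs : s ∈ splitBag G p n t)
    (hs' : s' ∈ splitBag G p n t) (hswap : s'.1 = s.1.swap) (hlt : p s.1.1 < p s.1.2) :
    handover p n s.1.1 s.1.2 = t := by
  have ht := mem_splitBag.1 hs
  have ht' := mem_splitBag.1 hs'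
  simp only [hswap, Prod.fst_swap, Prod.snd_swap] at ht'
  rw [Set.uIcc_of_le (home_le_handover hlt.le)] at ht
  rw [Set.uIcc_of_ge (handover_le_home hlt (hpn _)), handover_comm] at ht'
  exact le_antisymm ht'.1 ht.2

theorem card_splitBag_le (hp : Function.Injective p) (hpn : ∀ v, p v < n) (t : ℕ) :
    (splitBag G p n t).card ≤ (edgesOver G p (t / (n + 1))).card + 1 := by
  set D := Finset.univ.filter fun s : {e : V × V // G.Adj e.1 e.2} =>
    p s.1.1 < p s.1.2 ∧ handover p n s.1.1 s.1.2 = t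
  have hD : D.card ≤ 1 := Finset.card_le_one.2 fun s hs s' hs' => by
    simp only [D, Finset.mem_filter, Finset.mem_univ, true_and] at hs hs'
    obtain ⟨h1, h2⟩ :=
      eq_and_eq_of_handover_eq hs.1 hs'.1 (hpn _) (hpn _) (hs.2.trans hs'.2.symm)
    exact Subtype.ext (Prod.ext (hp h1) (hp h2))
  have hinj : Set.InjOn (fun s : {e : V × V // G.Adj e.1 e.2} => orient p s.1)
      ↑(splitBag G p n t \ D) := by
    intro s hs s' hs' h
    simp only [Finset.coe_sdiff, Set.mem_sdiff, Finset.mem_coe] at hs hs'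
    rcases eq_or_eq_swap_of_orient_eq h with h | h
    · exact Subtype.ext h
    exfalso
    rcases (hp.ne (G.ne_of_adj s.2)).lt_or_gt with hlt | hgt
    · refine hs.2 (Finset.mem_filter.2 ⟨Finset.mem_univ _, hlt, ?_⟩)
      exact handover_eq_of_swap_mem_splitBag hpn hs.1 hs'.1 (by rw [h, Prod.swap_swap]) hlt
    · refine hs'.2 (Finset.mem_filter.2 ⟨Finset.mem_univ _, by rwa [h] at hgt, ?_⟩)
      exact handover_eq_of_swap_mem_splitBag hpn hs'.1 hs.1 h (by rwa [h] at hgt)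
  calc (splitBag G p n t).card ≤ (splitBag G p n t \ D).card + D.card :=
        Finset.card_le_card_sdiff_add_card
    _ ≤ (edgesOver G p (t / (n + 1))).card + 1 :=
        add_le_add (Finset.card_le_card_of_injOn _
          (fun s hs => orient_mem_edgesOver hp hpn (Finset.mem_sdiff.1 hs).1) hinj) hD

end SplitDecomposition

section Arrangements

variable {G : SimpleGraph V} {L : List V}

theorem edgesOver_idxOf_subset (hL : ∀ v, v ∈ L) (i : ℕ) :
    edgesOver G L.idxOf i ⊆
      cutSetSG G (L.take i).toFinset ∪ cutSetSG G (L.take (i + 1)).toFinset := by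
  intro e he
  simp only [edgesOver, Finset.mem_filter, Finset.mem_univ, true_and, Set.mem_Icc] at he
  obtain ⟨hadj, hlt, hi1, hi2⟩ := he
  simp only [cutSetSG, Finset.mem_union, Finset.mem_filter, Finset.mem_univ, true_and,
    List.mem_toFinset, List.mem_take_iff_idxOf_lt (hL _)]
  rcases hi1.lt_or_eq with h | h
  · exact .inl ⟨hadj, h, by omega⟩
  · exact .inr ⟨hadj, by omega, by omega⟩

theorem card_edgesOver_le_socVal (hL : ∀ v, v ∈ L) (i : ℕ) :
    (edgesOver G L.idxOf i).card ≤ socVal G L := by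
  rcases le_or_gt i L.length with hi | hi
  · exact (Finset.card_le_card (edgesOver_idxOf_subset hL i)).trans
      (Finset.le_sup (f := fun i => (cutSetSG G (L.take i).toFinset ∪
        cutSetSG G (L.take (i + 1)).toFinset).card) (Finset.mem_range.2 (by omega)))
  · refine (Finset.card_eq_zero.2 (Finset.filter_eq_empty_iff.2 fun e _ he => ?_)).trans_le
      (Nat.zero_le _)
    have := List.idxOf_lt_length_of_mem (hL e.2)
    simp only [Set.mem_Icc] at he
    omega

theorem pathwidth_splitGraph_le_socVal (hL : ∀ v, v ∈ L) :
    pathwidth (splitGraph G) ≤ socVal G L := by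
  have hpos : ∀ v, L.idxOf v < L.length := fun v => List.idxOf_lt_length_of_mem (hL v)
  have hinj : Function.Injective L.idxOf := fun u v h => (List.idxOf_inj (hL u)).1 h
  exact pathwidth_le_of_isPathDecomp (isPathDecomp_splitBag hpos) fun t =>
    (card_splitBag_le hinj hpos t).trans (Nat.add_le_add_right (card_edgesOver_le_socVal hL _) 1)

variable (G L) in
theorem cutSizeSG_take_le_cwVal (j : ℕ) : cutSizeSG G (L.take j).toFinset ≤ cwVal G L := by
  rw [List.take_eq_take_min]
  exact Finset.le_sup (f := fun i => cutSizeSG G (L.take i).toFinset)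
    (Finset.mem_range.2 (Nat.lt_succ_of_le (min_le_right _ _)))

variable (G L) in
theorem socVal_le_two_mul_cwVal : socVal G L ≤ 2 * cwVal G L :=
  Finset.sup_le fun k _ => (Finset.card_union_le _ _).trans <| by
    rw [two_mul]
    exact add_le_add (cutSizeSG_take_le_cwVal G L k) (cutSizeSG_take_le_cwVal G L (k + 1))

end Arrangements

omit [DecidableEq V] in
theorem exists_arrangement_eq_sInf (f : List V → ℕ) :
    ∃ L : List V, L.Nodup ∧ (∀ v, v ∈ L) ∧
      f L = sInf {n | ∃ L : List V, L.Nodup ∧ (∀ v, v ∈ L) ∧ f L = n} :=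
  Nat.sInf_mem (s := {n | ∃ L : List V, L.Nodup ∧ (∀ v, v ∈ L) ∧ f L = n})
    ⟨f Finset.univ.toList, Finset.univ.toList, Finset.nodup_toList _,
      fun v => Finset.mem_toList.2 (Finset.mem_univ v), rfl⟩

theorem socw_le_two_mul_cutwidthSG (G : SimpleGraph V) : socw G ≤ 2 * cutwidthSG G := by
  obtain ⟨L, hnd, hL, hcw⟩ := exists_arrangement_eq_sInf (cwVal G)
  calc socw G ≤ socVal G L := by rw [socw]; exact Nat.sInf_le ⟨L, hnd, hL, rfl⟩
    _ ≤ 2 * cwVal G L := socVal_le_two_mul_cwVal G L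
    _ = 2 * cutwidthSG G := by rw [hcw, cutwidthSG]

/-- `pathwidth(G') ≤ socw(G)`, and in particular `pathwidth(G') ≤ 2 · cutwidth(G)`
since `socw(G) ≤ 2 · cutwidth(G)`. -/
theorem pathwidth_split_le_socw (G : SimpleGraph V) :
    pathwidth (splitGraph G) ≤ socw G ∧
      socw G ≤ 2 * cutwidthSG G ∧
      pathwidth (splitGraph G) ≤ 2 * cutwidthSG G := by
  obtain ⟨L, -, hL, hsocw⟩ := exists_arrangement_eq_sInf (socVal G)
  have hpw : pathwidth (splitGraph G) ≤ socw G :=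
    (pathwidth_splitGraph_le_socVal hL).trans_eq hsocw
  have hsocw_le := socw_le_two_mul_cutwidthSG G
  exact ⟨hpw, hsocw_le, hpw.trans hsocw_le⟩
end
end
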